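/- The choreography H = a_{r→s} ; b_{t→u} (with r, s, t, u pairwise distinct roles) is not well formed: the system obtained by projection, [ā_s]_r || [a]_s || [b̄_u]_t || [b]_u, is a correct composition, but it does not implement H, since it admits the conversation b_{t→u} a_{r→s} which is not a trace of H. -/

import Mathlib

/-!
Formalization of choreographies, orchestrations and behavioural contracts
following Bravetti–Zavattaro, "Choreographies and Behavioural Contracts on
the Way to Dynamic Updates".
-/

/-- Action names (a denumerable set). -/
abbrev AName := ℕ
/-- Roles. -/
abbrev Role := ℕ

/-! ### The choreography calculus -/

/-- Choreographies, including the auxiliary terms `one` (successful completion)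
and `zero` (halt). -/
inductive Chor : Type
  | comm : AName → Role → Role → Chor      -- a_{r→s}
  | choice : Chor → Chor → Chor
  | seq : Chor → Chor → Chor
  | par : Chor → Chor → Chor
  | star : Chor → Chor
  | one : Chor
  | zero : Chor
  deriving DecidableEq

/-- Labels of the choreography semantics: interactions `a_{r→s}` and `√`. -/
inductive CLabel : Type
  | comm : AName → Role → Role → CLabel
  | tick : CLabel
  deriving DecidableEq

/-- Operational semantics of choreographies. -/
inductive CStep : Chor → CLabel → Chor → Prop
  | comm : CStep (.comm a r s) (.comm a r s) .one
  | one : CStep .one .tick .zero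
  | starTick : CStep (.star H) .tick .zero
  | choiceL : CStep H η H' → CStep (.choice H L) η H'
  | choiceR : CStep L η L' → CStep (.choice H L) η L'
  | seqL : CStep H η H' → η ≠ .tick → CStep (.seq H L) η (.seq H' L)
  | seqTick : CStep H .tick H' → CStep L η L' → CStep (.seq H L) η L'
  | parL : CStep H η H' → η ≠ .tick → CStep (.par H L) η (.par H' L)
  | parR : CStep L η L' → η ≠ .tick → CStep (.par H L) η (.par H L')
  | parTick : CStep H .tick H' → CStep L .tick L' → CStep (.par H L) .tick (.par H' L')
  | starStep : CStep H η H' → η ≠ .tick → CStep (.star H) η (.seq H' (.star H))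

/-- Roles syntactically occurring in a choreography. -/
def rolesC : Chor → Finset Role
  | .comm _ r s => {r, s}
  | .choice H L | .seq H L | .par H L => rolesC H ∪ rolesC L
  | .star H => rolesC H
  | .one | .zero => ∅

/-- Action names syntactically occurring in a choreography. -/
def namesC : Chor → Finset AName
  | .comm a _ _ => {a}
  | .choice H L | .seq H L | .par H L => namesC H ∪ namesC L
  | .star H => namesC H
  | .one | .zero => ∅

/-! ### The orchestration calculus -/

/-- Orchestrations (also used as behavioural contract terms). -/
inductive Orc : Type
  | zero : Orc
  | one : Orc
  | tau : Orc
  | inp : AName → Orc              -- receive a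
  | out : AName → Role → Orc       -- invoke ā directed to role l
  | seq : Orc → Orc → Orc
  | choice : Orc → Orc → Orc
  | par : Orc → Orc → Orc
  | star : Orc → Orc
  deriving DecidableEq

/-- Labels of the orchestration/contract semantics. -/
inductive OLabel : Type
  | tau : OLabel
  | inp : AName → OLabel
  | out : AName → Role → OLabel
  | tick : OLabel
  deriving DecidableEq

/-- Operational semantics of orchestrations/contracts. -/
inductive OStep : Orc → OLabel → Orc → Prop
  | one : OStep .one .tick .zero
  | tau : OStep .tau .tau .one
  | inp : OStep (.inp a) (.inp a) .one
  | out : OStep (.out a l) (.out a l) .one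
  | choiceL : OStep C μ C' → OStep (.choice C D) μ C'
  | choiceR : OStep D μ D' → OStep (.choice C D) μ D'
  | seqL : OStep C μ C' → μ ≠ .tick → OStep (.seq C D) μ (.seq C' D)
  | seqTick : OStep C .tick C' → OStep D μ D' → OStep (.seq C D) μ D'
  | parL : OStep C μ C' → μ ≠ .tick → OStep (.par C D) μ (.par C' D)
  | parR : OStep D μ D' → μ ≠ .tick → OStep (.par C D) μ (.par C D')
  | parTick : OStep C .tick C' → OStep D .tick D' → OStep (.par C D) .tick (.par C' D')
  | starTick : OStep (.star C) .tick .zero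
  | starStep : OStep C μ C' → μ ≠ .tick → OStep (.star C) μ (.seq C' (.star C))

/-! ### Systems (compositions of located orchestrations/contracts) -/

/-- Systems: parallel compositions of located orchestrations `[C]_l`. -/
inductive Sys : Type
  | atom : Orc → Role → Sys
  | par : Sys → Sys → Sys
  deriving DecidableEq

/-- Labels of the system semantics. -/
inductive SLabel : Type
  | tau : SLabel
  | inp : AName → Role → SLabel            -- a_s
  | out : AName → Role → Role → SLabel     -- ā_{r s}
  | comm : AName → Role → Role → SLabel    -- a_{r→s}
  | tick : SLabel
  deriving DecidableEq

/-- Operational semantics of systems. -/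
inductive SStep : Sys → SLabel → Sys → Prop
  | atomTau : OStep C .tau C' → SStep (.atom C r) .tau (.atom C' r)
  | atomInp : OStep C (.inp a) C' → SStep (.atom C r) (.inp a r) (.atom C' r)
  | atomOut : OStep C (.out a s) C' → SStep (.atom C r) (.out a r s) (.atom C' r)
  | atomTick : OStep C .tick C' → SStep (.atom C r) .tick (.atom C' r)
  | parL : SStep P μ P' → μ ≠ .tick → SStep (.par P Q) μ (.par P' Q)
  | parR : SStep Q μ Q' → μ ≠ .tick → SStep (.par P Q) μ (.par P Q')
  | commLR : SStep P (.out a r s) P' → SStep Q (.inp a s) Q' →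
      SStep (.par P Q) (.comm a r s) (.par P' Q')
  | commRL : SStep P (.inp a s) P' → SStep Q (.out a r s) Q' →
      SStep (.par P Q) (.comm a r s) (.par P' Q')
  | parTick : SStep P .tick P' → SStep Q .tick Q' → SStep (.par P Q) .tick (.par P' Q')

/-- One step of a completely specified system: an internal `τ` step or a
completed interaction `a_{r→s}`. -/
def CompleteStep (P P' : Sys) : Prop :=
  SStep P .tau P' ∨ ∃ a r s, SStep P (.comm a r s) P'

/-- Reachability through complete (τ / completed-interaction) steps. -/
inductive Reach : Sys → Sys → Prop
  | refl (P) : Reach P P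
  | step : CompleteStep P P' → Reach P' P'' → Reach P P''

/-- `P` can perform the successful-termination label `√`. -/
def CanTick (P : Sys) : Prop := ∃ P', SStep P .tick P'

/-- Correct composition `P↓`: every reachable state can reach a state able to
perform `√`. -/
def Correct (P : Sys) : Prop :=
  ∀ P', Reach P P' → ∃ P'', Reach P' P'' ∧ CanTick P''

/-- `WTrace P w` is the weak transition `P ⇒^{w√}`: `P` performs the sequence
`w` of completed interactions `a_{r→s}` (absorbing `τ` steps) and then `√`. -/
inductive WTrace : Sys → List (AName × Role × Role) → Prop
  | tick : CanTick P → WTrace P []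
  | tau : SStep P .tau P' → WTrace P' w → WTrace P w
  | comm : SStep P (.comm a r s) P' → WTrace P' w → WTrace P ((a, r, s) :: w)

/-- `CTrace H w` is the transition sequence `H →^{w√}`. -/
inductive CTrace : Chor → List (AName × Role × Role) → Prop
  | tick : CStep H .tick H' → CTrace H []
  | comm : CStep H (.comm a r s) H' → CTrace H' w → CTrace H ((a, r, s) :: w)

/-- `P` implements `H` (written `P ∝ H`): `P` is a correct composition and all
its conversations (followed by `√`) are admitted by `H`. -/
def Implements (P : Sys) (H : Chor) : Prop :=
  Correct P ∧ ∀ w, WTrace P w → CTrace H w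

/-! ### Projection and well-formedness -/

/-- Projection of a choreography on a role (homomorphic over all operators). -/
def proj : Chor → Role → Orc
  | .comm a r s, t => if t = r then .out a s else if t = s then .inp a else .one
  | .choice H L, t => .choice (proj H t) (proj L t)
  | .seq H L, t => .seq (proj H t) (proj L t)
  | .par H L, t => .par (proj H t) (proj L t)
  | .star H, t => .star (proj H t)
  | .one, _ => .one
  | .zero, _ => .zero

/-- Parallel composition of a list of located contracts
`[C_1]_{l_1} || … || [C_n]_{l_n}`. -/
def composeC : List (Orc × Role) → Sys
  | [] => .atom .one 0
  | [(C, l)] => .atom C l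
  | (C, l) :: x :: xs => .par (.atom C l) (composeC (x :: xs))

/-- Well-formed choreography: the system obtained by projecting `H` on all its
roles implements `H` (for any enumeration of its roles). -/
def WellFormed (H : Chor) : Prop :=
  ∀ L : List Role, L.Nodup → L.toFinset = rolesC H →
    Implements (composeC (L.map fun r => (proj H r, r))) H

/-! ### Behavioural contracts: basic notions -/

/-- Roles targeted by output actions syntactically occurring in a contract. -/
def oroles : Orc → Finset Role
  | .out _ l => {l}
  | .seq C D | .choice C D | .par C D => oroles C ∪ oroles D
  | .star C => oroles C
  | _ => ∅

/-- Input action names syntactically occurring in a contract: `I(C)`. -/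
def inames : Orc → Finset AName
  | .inp a => {a}
  | .seq C D | .choice C D | .par C D => inames C ∪ inames D
  | .star C => inames C
  | _ => ∅

/-- `C \\ M`: replace every input on a name in `M` occurring in `C` by `0`. -/
def restrict (C : Orc) (M : Finset AName) : Orc :=
  match C with
  | .inp a => if a ∈ M then .zero else .inp a
  | .seq C D => .seq (restrict C M) (restrict D M)
  | .choice C D => .choice (restrict C M) (restrict D M)
  | .par C D => .par (restrict C M) (restrict D M)
  | .star C => .star (restrict C M)
  | C => C

/-- Reachability in the contract LTS (through any labels). -/
inductive OReach : Orc → Orc → Prop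
  | refl (C) : OReach C C
  | step : OStep C μ C' → OReach C' C'' → OReach C C''

/-- Output persistence: once a contract decides to execute an output, its
actual execution is mandatory to reach successful termination. -/
def OutputPersistent (C : Orc) : Prop :=
  ∀ C', OReach C C' → ∀ a l, (∃ D, OStep C' (.out a l) D) →
    (¬ ∃ D, OStep C' .tick D) ∧
    (∀ μ C'', OStep C' μ C'' → μ ≠ .out a l → ∃ D, OStep C'' (.out a l) D)

/-- The list of roles of the located contracts occurring in a system. -/
def rolesList : Sys → List Role
  | .atom _ r => [r]
  | .par P Q => rolesList P ++ rolesList Q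

/-- No contract sends outputs to its own role. -/
def NoSelfOut : Sys → Prop
  | .atom C r => r ∉ oroles C
  | .par P Q => NoSelfOut P ∧ NoSelfOut Q

/-- Well-formed system: pairwise distinct roles, no output to one's own role. -/
def WFSys (P : Sys) : Prop := (rolesList P).Nodup ∧ NoSelfOut P

/-- All contracts occurring in the system are output persistent. -/
def AllOP : Sys → Prop
  | .atom C _ => OutputPersistent C
  | .par P Q => AllOP P ∧ AllOP Q

/-- The subcontract relation `C' ⪯ C` (compliance testing): for every fresh
role `l` and every test composition `P` of output persistent contracts not
using `l`, correctness of `[C]_l || P` implies correctness of `[C']_l || P`. -/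
def Subcontract (C' C : Orc) : Prop :=
  ∀ l : Role, l ∉ oroles C ∪ oroles C' →
    ∀ P : Sys, AllOP P → WFSys P → l ∉ rolesList P →
      Correct (.par (.atom C l) P) → Correct (.par (.atom C' l) P)

/-- Independent subcontract pre-order over output persistent contracts:
a pre-order such that refining any number of contracts of a correct system
independently preserves correctness. -/
def IndepSubcontractPre (le : Orc → Orc → Prop) : Prop :=
  (∀ C, OutputPersistent C → le C C) ∧
  (∀ C₁ C₂ C₃, OutputPersistent C₁ → OutputPersistent C₂ → OutputPersistent C₃ →
      le C₁ C₂ → le C₂ C₃ → le C₁ C₃) ∧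
  (∀ L : List (Orc × Orc × Role), L ≠ [] →
    (∀ x ∈ L, OutputPersistent x.1 ∧ OutputPersistent x.2.1 ∧ le x.2.1 x.1) →
    (L.map fun x => x.2.2).Nodup →
    (∀ x ∈ L, x.2.2 ∉ oroles x.1 ∪ oroles x.2.1) →
    Correct (composeC (L.map fun x => (x.1, x.2.2))) →
    Correct (composeC (L.map fun x => (x.2.1, x.2.2))))

/-- An uncontrollable contract: no test composition can lead it to success. -/
def Uncontrollable (C : Orc) : Prop :=
  ¬ ∃ (l : Role) (P : Sys), l ∉ oroles C ∧ AllOP P ∧ WFSys P ∧ l ∉ rolesList P ∧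
      Correct (.par (.atom C l) P)

/-- Weak traces of a contract: sequences of visible labels, absorbing `τ`. -/
inductive WOTrace : Orc → List OLabel → Prop
  | nil (C) : WOTrace C []
  | tau : OStep C .tau C' → WOTrace C' w → WOTrace C w
  | vis : OStep C μ C' → μ ≠ .tau → WOTrace C' w → WOTrace C (μ :: w)

/-! ### Should-testing (fair testing) à la Rensink–Vogler -/

/-- Labels of tests: internal moves, synchronization with a (visible) action of
the tested contract (`√` included as any other action), and test success `√'`. -/
inductive TLab : Type
  | tau : TLab
  | sync : OLabel → TLab
  | succ : TLab

/-- A test: a labelled transition system over `TLab`. -/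
structure TestLTS where
  S : Type
  step : S → TLab → S → Prop
  init : S

/-- Steps of a contract/test configuration. -/
inductive TCStep (T : TestLTS) : (Orc × T.S) → (Orc × T.S) → Prop
  | ctau : OStep C .tau C' → TCStep T (C, t) (C', t)
  | ttau : T.step t .tau t' → TCStep T (C, t) (C, t')
  | sync : OStep C μ C' → μ ≠ OLabel.tau → T.step t (.sync μ) t' → TCStep T (C, t) (C', t')

/-- Reachability of configurations. -/
inductive TCReach (T : TestLTS) : (Orc × T.S) → (Orc × T.S) → Prop
  | refl (c) : TCReach T c c
  | step : TCStep T c c' → TCReach T c' c'' → TCReach T c c''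

/-- `C` should-passes `T`: from every reachable configuration a configuration
in which the test can perform the success action is reachable. -/
def Shd (C : Orc) (T : TestLTS) : Prop :=
  ∀ c, TCReach T (C, T.init) c → ∃ c', TCReach T c c' ∧ ∃ t', T.step c'.2 .succ t'

/-- The should-testing (fair testing) pre-order: `ShouldPre C' C` holds iff
every test that `C` should-passes is also should-passed by `C'`. -/
def ShouldPre (C' C : Orc) : Prop := ∀ T : TestLTS, Shd C T → Shd C' T

/-- The normal form `NF(C)`: the recursive-equations presentation of the LTS of
`C`.  Since contracts are here represented directly by LTS-denoting terms and
the should-testing pre-order only depends on the underlying LTS, the normal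
form is the term itself. -/
def NF (C : Orc) : Orc := C

/-!
Write `P_{xy}` for `[ā_s]_r || [a]_s || [b̄_u]_t || [b]_u` after `a_{r→s}` has (`x = 1`) or has
not (`x = 0`) been performed, and likewise `b_{t→u}` (`y`). Since the receivers `s ≠ u` differ,
no output can meet the wrong input, so complete steps never leave the four states `P_{xy}`;
each of them reaches `P_{11}`, which performs `√`. The two interactions are independent, so
this system, and likewise the projection of `a_{r→s} ; b_{t→u}` (which differs only by extra
`1`s), can perform `b_{t→u}` first, whereas every conversation of `a_{r→s} ; L` begins with
`a_{r→s}`.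
-/

namespace SStep

variable {a : AName} {r l : Role} {P Q R : Sys} {μ : SLabel}

theorem atom_out_iff :
    SStep (.atom (.out a l) r) μ R ↔ μ = .out a r l ∧ R = .atom .one r := by
  constructor
  · rintro (⟨⟨⟩⟩ | ⟨⟨⟩⟩ | ⟨⟨⟩⟩ | ⟨⟨⟩⟩); simp
  · rintro ⟨rfl, rfl⟩; exact .atomOut .out

theorem atom_inp_iff : SStep (.atom (.inp a) r) μ R ↔ μ = .inp a r ∧ R = .atom .one r := by
  constructor
  · rintro (⟨⟨⟩⟩ | ⟨⟨⟩⟩ | ⟨⟨⟩⟩ | ⟨⟨⟩⟩); simp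
  · rintro ⟨rfl, rfl⟩; exact .atomInp .inp

theorem atom_one_iff : SStep (.atom .one r) μ R ↔ μ = .tick ∧ R = .atom .zero r := by
  constructor
  · rintro (⟨⟨⟩⟩ | ⟨⟨⟩⟩ | ⟨⟨⟩⟩ | ⟨⟨⟩⟩); simp
  · rintro ⟨rfl, rfl⟩; exact .atomTick .one

theorem par_iff : SStep (.par P Q) μ R ↔
    (∃ P', SStep P μ P' ∧ μ ≠ .tick ∧ R = .par P' Q) ∨
    (∃ Q', SStep Q μ Q' ∧ μ ≠ .tick ∧ R = .par P Q') ∨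
    (∃ a r s P' Q', μ = .comm a r s ∧ SStep P (.out a r s) P' ∧ SStep Q (.inp a s) Q' ∧
      R = .par P' Q') ∨
    (∃ a r s P' Q', μ = .comm a r s ∧ SStep P (.inp a s) P' ∧ SStep Q (.out a r s) Q' ∧
      R = .par P' Q') ∨
    (∃ P' Q', μ = .tick ∧ SStep P .tick P' ∧ SStep Q .tick Q' ∧ R = .par P' Q') := by
  constructor
  · intro h
    cases h with
    | parL h hμ => exact .inl ⟨_, h, hμ, rfl⟩
    | parR h hμ => exact .inr <| .inl ⟨_, h, hμ, rfl⟩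
    | commLR h₁ h₂ => exact .inr <| .inr <| .inl ⟨_, _, _, _, _, rfl, h₁, h₂, rfl⟩
    | commRL h₁ h₂ =>
      exact .inr <| .inr <| .inr <| .inl ⟨_, _, _, _, _, rfl, h₁, h₂, rfl⟩
    | parTick h₁ h₂ => exact .inr <| .inr <| .inr <| .inr ⟨_, _, rfl, h₁, h₂, rfl⟩
  · rintro (⟨_, h, hμ, rfl⟩ | ⟨_, h, hμ, rfl⟩ |
      ⟨_, _, _, _, _, rfl, h₁, h₂, rfl⟩ | ⟨_, _, _, _, _, rfl, h₁, h₂, rfl⟩ |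
      ⟨_, _, rfl, h₁, h₂, rfl⟩)
    · exact .parL h hμ
    · exact .parR h hμ
    · exact .commLR h₁ h₂
    · exact .commRL h₁ h₂
    · exact .parTick h₁ h₂

end SStep

theorem Reach.trans {P Q R : Sys} (hPQ : Reach P Q) (hQR : Reach Q R) : Reach P R := by
  induction hPQ with
  | refl => exact hQR
  | step h _ ih => exact .step h (ih hQR)

theorem correct_of_closed {P : Sys} (S : Sys → Prop) (hP : S P)
    (hclosed : ∀ Q Q', S Q → CompleteStep Q Q' → S Q')
    (hprogress : ∀ Q, S Q → ∃ Q', Reach Q Q' ∧ CanTick Q') : Correct P := by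
  suffices ∀ Q Q', Reach Q Q' → S Q → S Q' from fun P' h => hprogress P' (this P P' h hP)
  intro Q Q' h
  induction h with
  | refl => exact id
  | step hstep _ ih => exact fun hQ => ih (hclosed _ _ hQ hstep)

theorem not_implements_of_wtrace {P : Sys} {H : Chor} {w : List (AName × Role × Role)}
    (hP : WTrace P w) (hH : ¬ CTrace H w) : ¬ Implements P H :=
  fun h => hH (h.2 w hP)

theorem CTrace.eq_of_seq_comm {a : AName} {r s : Role} {L : Chor} {x : AName × Role × Role}
    {w : List (AName × Role × Role)} (h : CTrace (.seq (.comm a r s) L) (x :: w)) :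
    x = (a, r, s) := by
  rcases h with _ | ⟨hstep, _⟩
  rcases hstep with _ | _ | _ | _ | _ | ⟨⟨⟩, _⟩ | ⟨⟨⟩, _⟩
  rfl

section TwoComms

variable (a b : AName) (r s t u : Role)

def twoComms (doneA doneB : Bool) : Sys :=
  .par (.atom (if doneA then .one else .out a s) r)
    (.par (.atom (if doneA then .one else .inp a) s)
      (.par (.atom (if doneB then .one else .out b u) t)
        (.atom (if doneB then .one else .inp b) u)))

theorem twoComms_of_completeStep {x y : Bool} {Q : Sys} (hsu : s ≠ u)
    (h : CompleteStep (twoComms a b r s t u x y) Q) :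
    ∃ x' y', Q = twoComms a b r s t u x' y' := by
  cases x <;> cases y <;>
    simp [CompleteStep, twoComms, SStep.par_iff, SStep.atom_out_iff, SStep.atom_inp_iff,
      SStep.atom_one_iff] at h ⊢ <;> grind

theorem twoComms_step_a (y : Bool) :
    SStep (twoComms a b r s t u false y) (.comm a r s) (twoComms a b r s t u true y) :=
  .commLR (.atomOut .out) (.parL (.atomInp .inp) SLabel.noConfusion)

theorem twoComms_step_b (x : Bool) :
    SStep (twoComms a b r s t u x false) (.comm b t u) (twoComms a b r s t u x true) :=
  .parR (.parR (.commLR (.atomOut .out) (.atomInp .inp)) SLabel.noConfusion) SLabel.noConfusion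

theorem twoComms_canTick : CanTick (twoComms a b r s t u true true) :=
  ⟨_, .parTick (.atomTick .one)
    (.parTick (.atomTick .one) (.parTick (.atomTick .one) (.atomTick .one)))⟩

theorem reach_twoComms_true_true (x y : Bool) :
    Reach (twoComms a b r s t u x y) (twoComms a b r s t u true true) := by
  have hb : ∀ x, Reach (twoComms a b r s t u x y) (twoComms a b r s t u x true) := by
    cases y
    · exact fun x => .step (.inr ⟨_, _, _, twoComms_step_b a b r s t u x⟩) (.refl _)
    · exact fun x => .refl _
  cases x
  · exact (hb false).trans (.step (.inr ⟨_, _, _, twoComms_step_a a b r s t u true⟩) (.refl _))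
  · exact hb true

theorem correct_twoComms (hsu : s ≠ u) : Correct (twoComms a b r s t u false false) :=
  correct_of_closed (fun Q => ∃ x y, Q = twoComms a b r s t u x y) ⟨_, _, rfl⟩
    (fun _ _ ⟨_, _, hQ⟩ h => twoComms_of_completeStep a b r s t u hsu (hQ ▸ h))
    (fun _ ⟨x, y, hQ⟩ => ⟨_, hQ ▸ reach_twoComms_true_true a b r s t u x y,
      twoComms_canTick a b r s t u⟩)

theorem wtrace_twoComms : WTrace (twoComms a b r s t u false false) [(b, t, u), (a, r, s)] :=
  .comm (twoComms_step_b a b r s t u false) <|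
    .comm (twoComms_step_a a b r s t u true) (.tick (twoComms_canTick a b r s t u))

end TwoComms

section SeqChoreography

variable (a b : AName) (r s t u : Role)

theorem rolesC_seq_comm_comm :
    rolesC (.seq (.comm a r s) (.comm b t u)) = ([r, s, t, u] : List Role).toFinset := by
  ext
  simp only [rolesC, List.toFinset_cons, List.toFinset_nil, Finset.mem_union,
    Finset.mem_insert, Finset.mem_singleton, insert_empty_eq]
  tauto

theorem wtrace_proj_seq_comm_comm (hroles : ([r, s, t, u] : List Role).Nodup) :
    WTrace (composeC ([r, s, t, u].map fun v => (proj (.seq (.comm a r s) (.comm b t u)) v, v)))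
      [(b, t, u), (a, r, s)] := by
  simp only [List.nodup_cons, List.mem_cons, List.not_mem_nil, or_false, not_or,
    List.nodup_nil, and_true] at hroles
  obtain ⟨⟨hrs, hrt, hru⟩, ⟨hst, hsu⟩, htu, -⟩ := hroles
  simp only [List.map, proj, hrs, hrt, hru, hst, hsu, htu, Ne.symm hrs, Ne.symm hrt, Ne.symm hru,
    Ne.symm hst, Ne.symm hsu, Ne.symm htu, if_true, if_false, composeC]
  refine .comm (.parR (.parR (.commLR (.atomOut (.seqTick .one .out))
    (.atomInp (.seqTick .one .inp))) SLabel.noConfusion) SLabel.noConfusion) ?_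
  refine .comm (.commLR (.atomOut (.seqL .out OLabel.noConfusion))
    (.parL (.atomInp (.seqL .inp OLabel.noConfusion)) SLabel.noConfusion)) ?_
  exact .tick ⟨_, .parTick (.atomTick (.seqTick .one .one))
    (.parTick (.atomTick (.seqTick .one .one)) (.parTick (.atomTick .one) (.atomTick .one)))⟩

theorem not_ctrace_seq_comm_comm (hrt : r ≠ t) :
    ¬ CTrace (.seq (.comm a r s) (.comm b t u)) [(b, t, u), (a, r, s)] :=
  fun h => hrt (congrArg (·.2.1) h.eq_of_seq_comm).symm

theorem not_wellFormed_seq_comm_comm (hroles : ([r, s, t, u] : List Role).Nodup) :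
    ¬ WellFormed (.seq (.comm a r s) (.comm b t u)) := by
  intro hwf
  have hrt : r ≠ t := by simp_all
  exact not_implements_of_wtrace (wtrace_proj_seq_comm_comm a b r s t u hroles)
    (not_ctrace_seq_comm_comm a b r s t u hrt)
    (hwf _ hroles (rolesC_seq_comm_comm a b r s t u).symm)

end SeqChoreography

theorem seq_choreography_not_well_formed_general
    (a b : AName) (r s t u : Role)
    (hroles : ([r, s, t, u] : List Role).Nodup) :
    Correct (.par (.atom (.out a s) r) (.par (.atom (.inp a) s)
      (.par (.atom (.out b u) t) (.atom (.inp b) u)))) ∧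
    ¬ Implements (.par (.atom (.out a s) r) (.par (.atom (.inp a) s)
      (.par (.atom (.out b u) t) (.atom (.inp b) u))))
      (.seq (.comm a r s) (.comm b t u)) ∧
    WTrace (.par (.atom (.out a s) r) (.par (.atom (.inp a) s)
      (.par (.atom (.out b u) t) (.atom (.inp b) u)))) [(b, t, u), (a, r, s)] ∧
    ¬ CTrace (.seq (.comm a r s) (.comm b t u)) [(b, t, u), (a, r, s)] ∧
    ¬ WellFormed (.seq (.comm a r s) (.comm b t u)) := by
  have hrt : r ≠ t := by simp_all
  have hsu : s ≠ u := by simp_all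
  have hnot := not_ctrace_seq_comm_comm a b r s t u hrt
  have hwtrace := wtrace_twoComms a b r s t u
  exact ⟨correct_twoComms a b r s t u hsu, not_implements_of_wtrace hwtrace hnot, hwtrace, hnot,
    not_wellFormed_seq_comm_comm a b r s t u hroles⟩

/-- The choreography `H = a_{r→s} ; b_{t→u}` (with `r`, `s`,
`t`, `u` pairwise distinct) is not well formed: the projected system
`[ā_s]_r || [a]_s || [b̄_u]_t || [b]_u` is a correct composition but does not
implement `H`, since it admits the conversation `b_{t→u} a_{r→s}` which is not
a trace of `H`. -/
theorem seq_choreography_not_well_formed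
    (a b : AName) (r s t u : Role) (hab : a ≠ b)
    (hroles : ([r, s, t, u] : List Role).Nodup) :
    Correct (.par (.atom (.out a s) r) (.par (.atom (.inp a) s)
      (.par (.atom (.out b u) t) (.atom (.inp b) u)))) ∧
    ¬ Implements (.par (.atom (.out a s) r) (.par (.atom (.inp a) s)
      (.par (.atom (.out b u) t) (.atom (.inp b) u))))
      (.seq (.comm a r s) (.comm b t u)) ∧
    WTrace (.par (.atom (.out a s) r) (.par (.atom (.inp a) s)
      (.par (.atom (.out b u) t) (.atom (.inp b) u)))) [(b, t, u), (a, r, s)] ∧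
    ¬ CTrace (.seq (.comm a r s) (.comm b t u)) [(b, t, u), (a, r, s)] ∧
    ¬ WellFormed (.seq (.comm a r s) (.comm b t u)) :=
  seq_choreography_not_well_formed_general a b r s t u hroles
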